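/- arXiv:1909.02155 — 3 statements merged into one kernel-verified Lean document; each statement's English description precedes it below -/
import Mathlib

section
/- For a weight sequence w = (w_1 ≥ ... ≥ w_n) with at least two distinct entries, b(w) = Σ_{i=2}^{n} (g_i(w) − 1), where g_i(w) is the gap sequence of w. -/
/-- Conjugate-partition decomposition of the weight sequence `w` of length `n`:
`w' = (n^{a_0}, h_1^{a_1}, …, h_k^{a_k})` with `h_0 = n`,
`n > h_1 > ⋯ > h_k > 0` and `a_1, …, a_k > 0`, expressed row-wise. -/
def ConjDecomp (w : ℕ → ℕ) (n k : ℕ) (h a : ℕ → ℕ) : Prop :=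
  h 0 = n ∧
  (∀ t, t < k → h (t + 1) < h t) ∧
  0 < h k ∧
  (∀ t, 1 ≤ t → t ≤ k → 0 < a t) ∧
  (∀ t, t < k → ∀ i, h (t + 1) < i → i ≤ h t →
      w i = ∑ s ∈ Finset.range (t + 1), a s) ∧
  (∀ i, 1 ≤ i → i ≤ h k → w i = ∑ s ∈ Finset.range (k + 1), a s)

/-- `b(w) = Σ_{t=1}^{k} (h_{t−1} − h_t)(a_t − 1) + (h_k − 1)(a_k − 1)` (with `b = 0`
when `k = 0`). -/
def bVal (k : ℕ) (h a : ℕ → ℕ) : ℕ :=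
  if k = 0 then 0
  else (∑ t ∈ Finset.Icc 1 k, (h (t - 1) - h t) * (a t - 1)) + (h k - 1) * (a k - 1)

/-- The gap sequence `g_i(w)`: if `w_i = w_1` it equals `w_1 − s(w_1)` where `s(w_1)`
is the largest entry strictly smaller than `w_1` (attained at the smallest index `j ≥ 1`
with `w_j < w_1`); otherwise it equals `p(w_i) − w_i`, where the predecessor `p(w_i)`
is the entry at the largest index `j ∈ [1, n]` with `w_j > w_i`. -/
noncomputable def gap (w : ℕ → ℕ) (n i : ℕ) : ℕ :=
  if w i = w 1 then w 1 - w (sInf {j : ℕ | 1 ≤ j ∧ w j < w 1})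
  else w (Nat.findGreatest (fun j => 1 ≤ j ∧ w i < w j) n) - w i

/-- for a non-increasing weight sequence with at least two distinct
entries, `b(w) = Σ_{i=2}^{n} (g_i(w) − 1)`. -/
theorem bVal_eq_sum_gaps
    (n : ℕ) (hn : 1 ≤ n) (w : ℕ → ℕ)
    (hw : ∀ i, 1 ≤ i → i < n → w (i + 1) ≤ w i)
    (k : ℕ) (hk : 1 ≤ k) (h a : ℕ → ℕ)
    (hconj : ConjDecomp w n k h a) :
    bVal k h a = ∑ i ∈ Finset.Icc 2 n, (gap w n i - 1) := by
  obtain ⟨hh0, hhlt, hhk, hapos, hwmid, hwtop⟩ := hconj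
  set S : ℕ → ℕ := fun t => ∑ s ∈ Finset.range (t + 1), a s with hS
  have hSdef : ∀ t, S t = ∑ s ∈ Finset.range (t + 1), a s := fun t => rfl
  -- monotonicity of h
  have hhmono : ∀ s t : ℕ, s ≤ t → t ≤ k → h t ≤ h s := by
    intro s t hst htk
    induction t with
    | zero =>
      obtain rfl : s = 0 := Nat.le_zero.mp hst
      exact le_rfl
    | succ t ih =>
      rcases Nat.eq_or_lt_of_le hst with rfl | hlt
      · exact le_rfl
      · exact le_trans (le_of_lt (hhlt t (by omega))) (ih (by omega) (by omega))
  have hhstrict : ∀ s t : ℕ, s < t → t ≤ k → h t < h s := by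
    intro s t hst htk
    calc h t ≤ h (s + 1) := hhmono (s + 1) t hst htk
    _ < h s := hhlt s (by omega)
  -- S facts
  have hSsucc : ∀ t : ℕ, S (t + 1) = S t + a (t + 1) := by
    intro t; simp [hS, Finset.sum_range_succ]
  have hSlt : ∀ s t : ℕ, s < t → t ≤ k → S s < S t := by
    intro s t hst htk
    induction t with
    | zero => omega
    | succ t ih =>
      have ha1 : 0 < a (t + 1) := hapos (t + 1) (by omega) htk
      rcases Nat.eq_or_lt_of_le (Nat.lt_succ_iff.mp hst) with rfl | hlt
      · rw [hSsucc]; omega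
      · have := ih (by omega) (by omega); rw [hSsucc]; omega
  -- antitonicity of w
  have hwanti : ∀ i j : ℕ, 1 ≤ i → i ≤ j → j ≤ n → w j ≤ w i := by
    intro i j hi hij hjn
    induction j with
    | zero => omega
    | succ j ih =>
      rcases Nat.eq_or_lt_of_le hij with rfl | hlt
      · exact le_rfl
      · exact le_trans (hw j (by omega) (by omega)) (ih (by omega) (by omega))
  have hhkn : h k ≤ n := hh0 ▸ hhmono 0 k (Nat.zero_le k) le_rfl
  have hhkn' : h k < n := hh0 ▸ hhstrict 0 k hk le_rfl
  have hw1 : w 1 = S k := hwtop 1 le_rfl hhk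
  -- value of w at h s, for 1 ≤ s ≤ k
  have hwh : ∀ s : ℕ, 1 ≤ s → s ≤ k → w (h s) = S s := by
    intro s h1s hsk
    rcases Nat.eq_or_lt_of_le hsk with rfl | hlt
    · exact hwtop (h s) hhk le_rfl
    · obtain ⟨t, rfl⟩ : ∃ t, s = t + 1 := ⟨s - 1, by omega⟩
      exact hwmid (t + 1) hlt (h (t + 1)) (hhlt (t + 1) hlt) le_rfl
  -- gap on the top block
  have hgaptop : ∀ i, 1 ≤ i → i ≤ h k → gap w n i = a k := by
    intro i hi hik
    have hwi : w i = w 1 := by rw [hwtop i hi hik, hw1]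
    rw [gap, if_pos hwi]
    have hkm : k - 1 + 1 = k := by omega
    have hlt' : h (k - 1 + 1) < h (k - 1) := hhlt (k - 1) (by omega)
    rw [hkm] at hlt'
    have hwhk1 : w (h k + 1) = S (k - 1) := by
      rw [hSdef]
      exact hwmid (k - 1) (by omega) (h k + 1) (by rw [hkm]; omega) (by omega)
    have hmem : h k + 1 ∈ {j : ℕ | 1 ≤ j ∧ w j < w 1} := by
      refine ⟨by omega, ?_⟩
      rw [hwhk1, hw1]
      exact hSlt (k - 1) k (by omega) le_rfl
    have hlb : ∀ j, j ∈ {j : ℕ | 1 ≤ j ∧ w j < w 1} → h k + 1 ≤ j := by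
      rintro j ⟨hj1, hjlt⟩
      by_contra hcon
      rw [hwtop j hj1 (by omega), hw1, hSdef] at hjlt
      omega
    have hinf : sInf {j : ℕ | 1 ≤ j ∧ w j < w 1} = h k + 1 :=
      le_antisymm (Nat.sInf_le hmem) (hlb _ (Nat.sInf_mem ⟨_, hmem⟩))
    rw [hinf, hwhk1, hw1]
    have := hSsucc (k - 1)
    rw [hkm] at this
    omega
  -- gap on lower blocks
  have hgapmid : ∀ t, t < k → ∀ i, h (t + 1) < i → i ≤ h t → gap w n i = a (t + 1) := by
    intro t htk i hi1 hi2
    have hwi : w i = S t := hwmid t htk i hi1 hi2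
    have hne : w i ≠ w 1 := by
      rw [hwi, hw1]; exact Nat.ne_of_lt (hSlt t k htk le_rfl)
    rw [gap, if_neg hne]
    have hwht1 : w (h (t + 1)) = S (t + 1) := hwh (t + 1) (by omega) htk
    have hfg : Nat.findGreatest (fun j => 1 ≤ j ∧ w i < w j) n = h (t + 1) := by
      rw [Nat.findGreatest_eq_iff]
      refine ⟨hh0 ▸ hhmono 0 (t + 1) (Nat.zero_le _) (by omega), ?_, ?_⟩
      · intro _
        refine ⟨by have := hhmono (t + 1) k htk le_rfl; omega, ?_⟩
        rw [hwi, hwht1]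
        exact hSlt t (t + 1) (by omega) htk
      · intro j hj hjn hPj
        have h1 : w j ≤ w (h (t + 1) + 1) := hwanti (h (t + 1) + 1) j (by omega) hj hjn
        have h2 : w (h (t + 1) + 1) = S t := hwmid t htk (h (t + 1) + 1) (by omega)
          (by have := hhlt t htk; omega)
        rw [hwi] at hPj
        omega
    rw [hfg, hwht1, hwi, hSsucc]
    omega
  -- now the sum
  have hsplit : ∑ i ∈ Finset.Icc 2 n, (gap w n i - 1)
      = (∑ i ∈ Finset.Ioc 1 (h k), (gap w n i - 1)) + ∑ i ∈ Finset.Ioc (h k) n, (gap w n i - 1) := by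
    rw [Finset.sum_Ioc_consecutive _ (by omega : 1 ≤ h k) hhkn, ← Finset.Icc_add_one_left_eq_Ioc]; rfl
  have htopsum : ∑ i ∈ Finset.Ioc 1 (h k), (gap w n i - 1) = (h k - 1) * (a k - 1) := by
    have hc : ∀ i ∈ Finset.Ioc 1 (h k), gap w n i - 1 = a k - 1 := by
      intro i hi
      rw [Finset.mem_Ioc] at hi
      rw [hgaptop i (by omega) hi.2]
    rw [Finset.sum_congr rfl hc, Finset.sum_const, Nat.card_Ioc, smul_eq_mul]
  have hmidsum : ∀ m, m ≤ k → ∑ i ∈ Finset.Ioc (h m) n, (gap w n i - 1)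
      = ∑ t ∈ Finset.range m, (h t - h (t + 1)) * (a (t + 1) - 1) := by
    intro m hm
    induction m with
    | zero => simp [hh0]
    | succ m ih =>
      have hle1 : h (m + 1) ≤ h m := le_of_lt (hhlt m (by omega))
      have hle2 : h m ≤ n := hh0 ▸ hhmono 0 m (Nat.zero_le m) (by omega)
      rw [← Finset.sum_Ioc_consecutive _ hle1 hle2, ih (by omega), Finset.sum_range_succ]
      have : ∑ i ∈ Finset.Ioc (h (m + 1)) (h m), (gap w n i - 1)
          = (h m - h (m + 1)) * (a (m + 1) - 1) := by
        have hc : ∀ i ∈ Finset.Ioc (h (m + 1)) (h m), gap w n i - 1 = a (m + 1) - 1 := by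
          intro i hi
          rw [Finset.mem_Ioc] at hi
          rw [hgapmid m (by omega) i hi.1 hi.2]
        rw [Finset.sum_congr rfl hc, Finset.sum_const, Nat.card_Ioc, smul_eq_mul]
      rw [this]
      ring
  have hreidx : ∑ t ∈ Finset.Icc 1 k, (h (t - 1) - h t) * (a t - 1)
      = ∑ t ∈ Finset.range k, (h t - h (t + 1)) * (a (t + 1) - 1) := by
    rw [← Finset.Ico_add_one_right_eq_Icc, Finset.sum_Ico_eq_sum_range]
    refine Finset.sum_congr rfl fun i _ => ?_
    have e1 : 1 + i - 1 = i := by omega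
    have e2 : 1 + i = i + 1 := by omega
    rw [e1, e2]
  rw [bVal, if_neg (by omega), hsplit, htopsum, hmidsum k le_rfl, hreidx]
  ring
end

section
/- Fix weights w_1 ≥ ... ≥ w_n ≥ 0 with at least two distinct values, and d ≥ n. Define C° by: C°_j = d·w_1 − 1 for 1 ≤ j ≤ h_k; C°_{h_k+1} = (h_k − 1)·w_1 + (d − h_k + 1)·w'' + (a_k − 1); C°_j = d·w_j + (a_{k−t} − 1) for h_{k−t} < j ≤ h_{k−1−t}, 0 ≤ t ≤ k−1. Then C°_1 ≥ C°_2 ≥ ... ≥ C°_n, i.e., the sequence C° is non-increasing. -/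
/-- The capacity sequence `C°` of the optimality construction (Section 6):
`C°_j = d·w_1 − 1` for `1 ≤ j ≤ h_k`;
`C°_{h_k+1} = (h_k − 1)·w_1 + (d − h_k + 1)·w_{h_k+1} + (a_k − 1)`;
`C°_j = d·w_j + (a_k − 1)` for `h_k + 1 < j ≤ h_{k−1}`;
`C°_j = d·w_j + (a_{k−t} − 1)` for `h_{k−t} < j ≤ h_{k−1−t}`, `1 ≤ t ≤ k−1`. -/
def IsCCirc (w : ℕ → ℕ) (n k d : ℕ) (h a : ℕ → ℕ) (C : ℕ → ℤ) : Prop :=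
  (∀ j, 1 ≤ j → j ≤ h k → C j = (d : ℤ) * w 1 - 1) ∧
  (C (h k + 1) = ((h k : ℤ) - 1) * w 1 + ((d : ℤ) - h k + 1) * w (h k + 1) + ((a k : ℤ) - 1)) ∧
  (∀ j, h k + 1 < j → j ≤ h (k - 1) → C j = (d : ℤ) * w j + ((a k : ℤ) - 1)) ∧
  (∀ t, 1 ≤ t → t ≤ k - 1 → ∀ j, h (k - t) < j → j ≤ h (k - t - 1) →
      C j = (d : ℤ) * w j + ((a (k - t) : ℤ) - 1))

open Finset

/-- For a row `h k < j ≤ n`, the `m < k` with `h (m + 1) < j ≤ h m`; it is `k` on the rows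
`j ≤ h k`. -/
def blockIndex (h : ℕ → ℕ) (k j : ℕ) : ℕ :=
  Nat.findGreatest (fun m => j ≤ h m) k

theorem blockIndex_antitone (h : ℕ → ℕ) (k : ℕ) : Antitone (blockIndex h k) :=
  fun _ _ hij => Nat.findGreatest_mono_left (fun _ hm => hij.trans hm) k

def cCircBlock (d : ℕ) (a : ℕ → ℕ) (m : ℕ) : ℤ :=
  d * ∑ s ∈ range (m + 1), (a s : ℤ) + a (m + 1) - 1

theorem cCircBlock_mono {d : ℕ} (hd : 1 ≤ d) (a : ℕ → ℕ) : Monotone (cCircBlock d a) := by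
  refine monotone_nat_of_le_succ fun m => ?_
  have hd' : (1 : ℤ) ≤ d := by exact_mod_cast hd
  simp only [cCircBlock, sum_range_succ _ (m + 1)]
  nlinarith [(a (m + 1)).cast_nonneg (α := ℤ), (a (m + 1 + 1)).cast_nonneg (α := ℤ)]

namespace ConjDecomp

variable {w : ℕ → ℕ} {n k : ℕ} {h a : ℕ → ℕ}

theorem h_le (hc : ConjDecomp w n k h a) : h k ≤ n :=
  hc.1 ▸ (strictAntiOn_Iic_of_succ_lt hc.2.1).antitoneOn
    (Set.mem_Iic.2 k.zero_le) (Set.mem_Iic.2 le_rfl) k.zero_le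

theorem blockIndex_spec (hc : ConjDecomp w n k h a) {j : ℕ} (hkj : h k < j) (hjn : j ≤ n) :
    blockIndex h k j < k ∧ h (blockIndex h k j + 1) < j ∧ j ≤ h (blockIndex h k j) := by
  have hmem : j ≤ h (blockIndex h k j) :=
    Nat.findGreatest_spec (P := fun m => j ≤ h m) k.zero_le (hc.1 ▸ hjn)
  have hlt : blockIndex h k j < k :=
    lt_of_le_of_ne (Nat.findGreatest_le k) fun heq => by rw [heq] at hmem; omega
  have hnext : ¬ j ≤ h (blockIndex h k j + 1) :=
    Nat.findGreatest_is_greatest (P := fun m => j ≤ h m) (Nat.lt_succ_self _) hlt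
  exact ⟨hlt, not_le.1 hnext, hmem⟩

theorem w_eq_sum (hc : ConjDecomp w n k h a) {j : ℕ} (hj : 1 ≤ j) (hjn : j ≤ n) :
    w j = ∑ s ∈ range (blockIndex h k j + 1), a s := by
  rcases le_or_gt j (h k) with hjk | hkj
  · rw [blockIndex, Nat.findGreatest_eq (P := fun m => j ≤ h m) hjk]
    exact hc.2.2.2.2.2 j hj hjk
  · obtain ⟨hlt, hlo, hhi⟩ := hc.blockIndex_spec hkj hjn
    exact hc.2.2.2.2.1 _ hlt j hlo hhi

theorem w_succ_h_eq (hc : ConjDecomp w n k h a) (hk : 1 ≤ k) :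
    w (h k + 1) = ∑ s ∈ range k, a s := by
  obtain ⟨k, rfl⟩ := Nat.exists_eq_add_of_le' hk
  exact hc.2.2.2.2.1 k k.lt_succ_self _ (Nat.lt_succ_self _) (hc.2.1 k k.lt_succ_self)

theorem w_one_eq (hc : ConjDecomp w n k h a) (hk : 1 ≤ k) : w 1 = w (h k + 1) + a k := by
  rw [hc.2.2.2.2.2 1 le_rfl hc.2.2.1, hc.w_succ_h_eq hk, sum_range_succ]

end ConjDecomp

namespace IsCCirc

variable {w : ℕ → ℕ} {n k d : ℕ} {h a : ℕ → ℕ} {C : ℕ → ℤ}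

theorem eq_cCircBlock (hC : IsCCirc w n k d h a C) (hc : ConjDecomp w n k h a) {j : ℕ}
    (hj : h k + 1 < j) (hjn : j ≤ n) : C j = cCircBlock d a (blockIndex h k j) := by
  obtain ⟨hlt, hlo, hhi⟩ := hc.blockIndex_spec (by omega : h k < j) hjn
  set m := blockIndex h k j
  have hCj : C j = d * w j + ((a (m + 1) : ℤ) - 1) := by
    rcases (show m + 1 ≤ k from hlt).eq_or_lt with hlast | hinner
    · rw [hlast]
      exact hC.2.2.1 j hj (by rwa [← hlast, Nat.add_sub_cancel])
    · have hkt : k - (k - (m + 1)) = m + 1 := by omega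
      have := hC.2.2.2 (k - (m + 1)) (by omega) (by omega) j (by rwa [hkt])
        (by rwa [hkt, Nat.add_sub_cancel])
      rwa [hkt] at this
  rw [hCj, hc.w_eq_sum (by omega) hjn, cCircBlock]
  push_cast
  ring

theorem succ_h_le (hC : IsCCirc w n k d h a C) (hc : ConjDecomp w n k h a) (hk : 1 ≤ k)
    (hkd : h k ≤ d) : C (h k + 1) ≤ C (h k) := by
  have hw1 : (w 1 : ℤ) = w (h k + 1) + a k := by exact_mod_cast hc.w_one_eq hk
  have hkd' : (h k : ℤ) ≤ d := by exact_mod_cast hkd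
  rw [hC.1 (h k) hc.2.2.1 le_rfl, hC.2.1, hw1]
  nlinarith [(a k).cast_nonneg (α := ℤ)]

theorem cCircBlock_le (hC : IsCCirc w n k d h a C) (hc : ConjDecomp w n k h a) (hk : 1 ≤ k)
    (hd : 1 ≤ d) {j : ℕ} (hkj : h k < j) (hjn : j ≤ n) :
    cCircBlock d a (blockIndex h k j) ≤ C j := by
  rcases (show h k + 1 ≤ j from hkj).eq_or_lt with rfl | hj
  · have hβ : blockIndex h k (h k + 1) ≤ k - 1 := by
      have := (hc.blockIndex_spec hkj hjn).1
      omega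
    have hw'' : (w (h k + 1) : ℤ) = ∑ s ∈ range k, (a s : ℤ) := by
      exact_mod_cast hc.w_succ_h_eq hk
    have hw1 : (w 1 : ℤ) = w (h k + 1) + a k := by exact_mod_cast hc.w_one_eq hk
    have hk1 : (1 : ℤ) ≤ h k := by exact_mod_cast hc.2.2.1
    calc cCircBlock d a (blockIndex h k (h k + 1)) ≤ cCircBlock d a (k - 1) :=
          cCircBlock_mono hd a hβ
      _ = d * w (h k + 1) + a k - 1 := by rw [cCircBlock, Nat.sub_add_cancel hk, hw'']
      _ ≤ C (h k + 1) := by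
          rw [hC.2.1, hw1]
          nlinarith [(a k).cast_nonneg (α := ℤ)]
  · exact (hC.eq_cCircBlock hc hj hjn).ge

end IsCCirc

theorem cCirc_antitone_general
    (n d k : ℕ) (hk : 1 ≤ k) (hd : n ≤ d)
    (w : ℕ → ℕ) (h a : ℕ → ℕ) (C : ℕ → ℤ)
    (hconj : ConjDecomp w n k h a)
    (hC : IsCCirc w n k d h a C) :
    ∀ j, 1 ≤ j → j < n → C (j + 1) ≤ C j := by
  intro j hj hjn
  have hkd : h k ≤ d := hconj.h_le.trans hd
  rcases lt_trichotomy j (h k) with hlt | rfl | hgt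
  · rw [hC.1 j hj hlt.le, hC.1 (j + 1) (by omega) hlt]
  · exact hC.succ_h_le hconj hk hkd
  · have hd1 : 1 ≤ d := hconj.2.2.1.trans_le hkd
    calc C (j + 1) = cCircBlock d a (blockIndex h k (j + 1)) :=
          hC.eq_cCircBlock hconj (by omega) hjn
      _ ≤ cCircBlock d a (blockIndex h k j) :=
          cCircBlock_mono hd1 a (blockIndex_antitone h k j.le_succ)
      _ ≤ C j := hC.cCircBlock_le hconj hk hd1 hgt hjn.le

/-- the sequence `C°` is non-increasing. -/
theorem cCirc_antitone
    (n d k : ℕ) (hn : 1 ≤ n) (hk : 1 ≤ k) (hd : n ≤ d)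
    (w : ℕ → ℕ) (h a : ℕ → ℕ) (C : ℕ → ℤ)
    (hw : ∀ i, 1 ≤ i → i < n → w (i + 1) ≤ w i)
    (hconj : ConjDecomp w n k h a)
    (hC : IsCCirc w n k d h a C) :
    ∀ j, 1 ≤ j → j < n → C (j + 1) ≤ C j :=
  cCirc_antitone_general n d k hk hd w h a C hconj hC
end

section
/- Suppose w = (w_1, ..., w_n) has at least two distinct parts and d ≥ n. Then the partitioning problem BP(d, C°; w) is NOT feasible, where C° is the capacity sequence from the optimality construction. That is, there is no assignment of the d·n balls to n bins with d balls each such that the total weight in bin j is at most C°_j for every j. -/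
lemma nat_lt_of_int_mul {a : ℕ} (X B : ℕ) (ha : 0 < a)
    (hlt : (a:ℤ) * X < (a:ℤ) * B) : X < B := by
  have h2 := (mul_lt_mul_iff_right₀ (show (0:ℤ) < a by exact_mod_cast ha)).1 hlt
  exact_mod_cast h2

lemma cCirc_aux : ∀ k, 1 ≤ k → ∀ (n d : ℕ), n ≤ d →
    ∀ (w h a : ℕ → ℕ) (C : ℕ → ℤ),
    ConjDecomp w n k h a → IsCCirc w n k d h a C →
    ¬ ∃ m : ℕ → ℕ → ℕ,
      (∀ i ∈ Finset.Icc 1 n, ∑ j ∈ Finset.Icc 1 n, m i j = d) ∧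
      (∀ j ∈ Finset.Icc 1 n, ∑ i ∈ Finset.Icc 1 n, m i j = d) ∧
      (∀ j ∈ Finset.Icc 1 n,
        ((∑ i ∈ Finset.Icc 1 n, m i j * w i : ℕ) : ℤ) ≤ C j) := by
  intro k
  induction k using Nat.strong_induction_on with
  | _ k IH =>
  rintro hk n d hd w h a C hconj hC ⟨m, hrow, hcol, hcap⟩
  obtain ⟨hh0, hdec, hhk, hapos, wmid, wtop⟩ := hconj
  obtain ⟨hC1, hC2, hC3, hC4⟩ := hC
  set H := h 1 with hH
  have hIcc : Finset.Icc 1 n = Finset.Ioc 0 n := Finset.Icc_add_one_left_eq_Ioc 0 n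
  have hHn : H < n := by have := hdec 0 hk; rwa [hh0] at this
  have hH1 : 0 < H := by
    rcases Nat.lt_or_ge 1 k with h2 | h1
    · have := hdec 1 h2; omega
    · have hk1 : k = 1 := by omega
      rw [hH, ← hk1]; exact hhk
  have ha1 : 0 < a 1 := hapos 1 le_rfl hk
  set X : ℕ → ℕ := fun j => ∑ i ∈ Finset.Ioc 0 H, m i j with hX
  set Y : ℕ → ℕ := fun j => ∑ i ∈ Finset.Ioc H n, m i j with hY
  have hsplit : ∀ f : ℕ → ℕ,
      ∑ i ∈ Finset.Ioc 0 H, f i + ∑ i ∈ Finset.Ioc H n, f i = ∑ i ∈ Finset.Ioc 0 n, f i :=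
    fun f => Finset.sum_Ioc_consecutive f (Nat.zero_le H) (le_of_lt hHn)
  have hXY : ∀ j, j ∈ Finset.Ioc 0 n → X j + Y j = d := by
    intro j hj
    have hc := hcol j (by rwa [hIcc]); rw [hIcc] at hc
    simp only [hX, hY]
    rw [← hc]; exact hsplit _
  -- every item of type ≤ H weighs at least a 0 + a 1
  have key : ∀ u, u ≤ k - 1 → ∀ i, 1 ≤ i → i ≤ h (k - u) →
      ∑ s ∈ Finset.range (k - u + 1), a s ≤ w i := by
    intro u
    induction u with
    | zero =>
      intro _ i h1i hik
      simp only [Nat.sub_zero] at hik ⊢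
      rw [wtop i h1i hik]
    | succ u ih =>
      intro hu i h1i hik
      by_cases hcase : i ≤ h (k - u)
      · refine le_trans ?_ (ih (by omega) i h1i hcase)
        exact Finset.sum_le_sum_of_subset (Finset.range_subset_range.2 (by omega))
      · push_neg at hcase
        have heq := wmid (k - (u+1)) (by omega) i
          (by rwa [show k - (u+1) + 1 = k - u by omega]) hik
        rw [heq]
  have hwlow1 : ∀ i, 1 ≤ i → i ≤ H → a 0 + a 1 ≤ w i := by
    intro i h1i hiH
    have hkey := key (k - 1) le_rfl i h1i (by rwa [show k - (k-1) = 1 by omega])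
    rw [show k - (k-1) + 1 = 2 by omega] at hkey
    simpa [Finset.sum_range_succ] using hkey
  have hwmid0 : ∀ i, H < i → i ≤ n → w i = a 0 := by
    intro i hHi hin
    have := wmid 0 hk i hHi (by rwa [hh0])
    simpa using this
  -- lower bound on the weight of each bin
  have Slow : ∀ j, j ∈ Finset.Ioc 0 n →
      a 0 * d + a 1 * X j ≤ ∑ i ∈ Finset.Ioc 0 n, m i j * w i := by
    intro j hj
    have h1 : X j * (a 0 + a 1) ≤ ∑ i ∈ Finset.Ioc 0 H, m i j * w i := by
      simp only [hX]
      rw [Finset.sum_mul]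
      refine Finset.sum_le_sum ?_
      intro i hi
      rw [Finset.mem_Ioc] at hi
      exact Nat.mul_le_mul_left _ (hwlow1 i hi.1 hi.2)
    have h2 : Y j * a 0 ≤ ∑ i ∈ Finset.Ioc H n, m i j * w i := by
      simp only [hY]
      rw [Finset.sum_mul]
      refine Finset.sum_le_sum ?_
      intro i hi
      rw [Finset.mem_Ioc] at hi
      rw [hwmid0 i hi.1 hi.2]
    calc a 0 * d + a 1 * X j
        = a 0 * (X j + Y j) + a 1 * X j := by rw [hXY j hj]
      _ = X j * (a 0 + a 1) + Y j * a 0 := by ring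
      _ ≤ _ := by rw [← hsplit (fun i => m i j * w i)]; exact Nat.add_le_add h1 h2
  -- total number of heavy balls
  have hsumX : ∑ j ∈ Finset.Ioc 0 n, X j = H * d := by
    simp only [hX]
    rw [Finset.sum_comm]
    have : ∀ i ∈ Finset.Ioc 0 H, ∑ j ∈ Finset.Ioc 0 n, m i j = d := by
      intro i hi
      rw [Finset.mem_Ioc] at hi
      have := hrow i (by rw [hIcc, Finset.mem_Ioc]; exact ⟨hi.1, le_trans hi.2 (le_of_lt hHn)⟩)
      rwa [hIcc] at this
    rw [Finset.sum_congr rfl this, Finset.sum_const, Nat.card_Ioc, Nat.sub_zero, smul_eq_mul]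
  rcases Nat.lt_or_ge 1 k with hk2 | hk1'
  · -- inductive step: k ≥ 2
    -- bins beyond H contain no heavy balls
    have Xzero : ∀ j, j ∈ Finset.Ioc H n → X j = 0 := by
      intro j hj
      rw [Finset.mem_Ioc] at hj
      have hjn : j ∈ Finset.Ioc 0 n := Finset.mem_Ioc.2 ⟨by omega, hj.2⟩
      have hcapj := hcap j (by rwa [hIcc]); rw [hIcc] at hcapj
      have e1 : k - (k - 1) = 1 := by omega
      have hCj := hC4 (k - 1) (by omega) le_rfl j
      rw [e1] at hCj
      have hCj := hCj hj.1 (by rw [show (1:ℕ) - 1 = 0 from rfl, hh0]; exact hj.2)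
      rw [hwmid0 j hj.1 hj.2] at hCj
      rw [hCj] at hcapj
      have hlow := Slow j hjn
      have hlow' : ((a 0 * d + a 1 * X j : ℕ) : ℤ) ≤ (d : ℤ) * (a 0) + ((a 1 : ℤ) - 1) :=
        le_trans (by exact_mod_cast hlow) hcapj
      push_cast at hlow'
      have : X j < 1 := by
        refine nat_lt_of_int_mul _ _ ha1 ?_
        push_cast
        linarith
      omega
    have m1zero : ∀ j, j ∈ Finset.Ioc H n → ∀ i, i ∈ Finset.Ioc 0 H → m i j = 0 := by
      intro j hj i hi
      have := Xzero j hj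
      simp only [hX] at this
      exact (Finset.sum_eq_zero_iff.1 this) i hi
    -- bins up to H are full of heavy balls
    have Xd : ∀ j, j ∈ Finset.Ioc 0 H → X j = d := by
      have hzero : ∑ j ∈ Finset.Ioc H n, X j = 0 :=
        Finset.sum_eq_zero (fun j hj => Xzero j hj)
      have htot : ∑ j ∈ Finset.Ioc 0 H, X j = H * d := by
        have hs := hsplit X
        rw [hzero] at hs
        omega
      intro j hj
      by_contra hne
      have hle : ∀ j', j' ∈ Finset.Ioc 0 H → X j' ≤ d := by
        intro j' hj'
        rw [Finset.mem_Ioc] at hj'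
        have := hXY j' (Finset.mem_Ioc.2 ⟨hj'.1, le_trans hj'.2 (le_of_lt hHn)⟩)
        omega
      have hlt : ∑ j' ∈ Finset.Ioc 0 H, X j' < ∑ _j' ∈ Finset.Ioc 0 H, d :=
        Finset.sum_lt_sum hle ⟨j, hj, lt_of_le_of_ne (hle j hj) hne⟩
      rw [htot, Finset.sum_const, Nat.card_Ioc, Nat.sub_zero, smul_eq_mul] at hlt
      omega
    have m2zero : ∀ j, j ∈ Finset.Ioc 0 H → ∀ i, i ∈ Finset.Ioc H n → m i j = 0 := by
      intro j hj i hi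
      have hYj : Y j = 0 := by
        have h1 := hXY j (Finset.mem_Ioc.2 ⟨(Finset.mem_Ioc.1 hj).1,
          le_trans (Finset.mem_Ioc.1 hj).2 (le_of_lt hHn)⟩)
        have h2 := Xd j hj
        omega
      simp only [hY] at hYj
      exact (Finset.sum_eq_zero_iff.1 hYj) i hi
    -- construct the sub-instance and contradict the induction hypothesis
    set a' : ℕ → ℕ := fun t => if t = 0 then a 0 + a 1 else a (t + 1) with ha'
    set h' : ℕ → ℕ := fun t => h (t + 1) with hh'
    have hsum' : ∀ t, ∑ s ∈ Finset.range (t + 1), a' s = ∑ s ∈ Finset.range (t + 2), a s := by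
      intro t
      induction t with
      | zero => simp [ha', Finset.sum_range_succ]
      | succ t ih =>
        rw [Finset.sum_range_succ, ih]
        have e : a' (t + 1) = a (t + 2) := by simp [ha']
        rw [e]
        conv_rhs => rw [show t + 1 + 2 = (t + 2) + 1 from rfl, Finset.sum_range_succ,
          Finset.sum_range_succ]
        rw [show t + 2 = (t + 1) + 1 from rfl, Finset.sum_range_succ]
    refine IH (k - 1) (by omega) (by omega) H d (by omega) w h' a' C ?_ ?_ ⟨m, ?_, ?_, ?_⟩
    · -- ConjDecomp w H (k-1) h' a'
      refine ⟨rfl, ?_, ?_, ?_, ?_, ?_⟩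
      · intro t ht
        exact hdec (t + 1) (by omega)
      · simp only [hh']
        rw [show k - 1 + 1 = k by omega]
        exact hhk
      · intro t ht1 htk
        simp only [ha', if_neg (by omega : ¬ t = 0)]
        exact hapos (t + 1) (by omega) (by omega)
      · intro t ht i hi1 hi2
        rw [hsum' t]
        exact wmid (t + 1) (by omega) i hi1 hi2
      · intro i h1i hik
        have e : k - 1 + 1 = k := by omega
        rw [hsum' (k - 1), show k - 1 + 2 = k + 1 by omega]
        exact wtop i h1i (by simpa only [hh', e] using hik)
    · -- IsCCirc w H (k-1) d h' a' C
      have ehk : h' (k - 1) = h k := by simp only [hh']; rw [show k - 1 + 1 = k by omega]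
      have eak : a' (k - 1) = a k := by
        simp only [ha', if_neg (by omega : ¬ k - 1 = 0)]
        rw [show k - 1 + 1 = k by omega]
      refine ⟨?_, ?_, ?_, ?_⟩
      · intro j hj1 hj2
        exact hC1 j hj1 (by rwa [ehk] at hj2)
      · rw [ehk, eak]; exact hC2
      · intro j hj1 hj2
        rw [ehk] at hj1
        rw [eak]
        refine hC3 j hj1 ?_
        simpa only [hh', show k - 1 - 1 + 1 = k - 1 by omega] using hj2
      · intro t ht1 ht2 j hj1 hj2
        have e1 : h' (k - 1 - t) = h (k - t) := by
          simp only [hh']; congr 1; omega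
        have e2 : h' (k - 1 - t - 1) = h (k - t - 1) := by
          simp only [hh']; congr 1; omega
        have e3 : a' (k - 1 - t) = a (k - t) := by
          simp only [ha', if_neg (by omega : ¬ k - 1 - t = 0)]
          congr 1; omega
        rw [e1] at hj1; rw [e2] at hj2; rw [e3]
        exact hC4 t ht1 (by omega) j hj1 hj2
    · -- row sums over the sub-instance
      intro i hi
      rw [show Finset.Icc 1 H = Finset.Ioc 0 H from Finset.Icc_add_one_left_eq_Ioc 0 H] at hi ⊢
      have hin : i ∈ Finset.Icc 1 n := by
        rw [hIcc, Finset.mem_Ioc]; rw [Finset.mem_Ioc] at hi; exact ⟨hi.1, by omega⟩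
      have hfull := hrow i hin; rw [hIcc] at hfull
      have hz : ∑ j ∈ Finset.Ioc H n, m i j = 0 :=
        Finset.sum_eq_zero (fun j hj => m1zero j hj i hi)
      have := hsplit (fun j => m i j)
      omega
    · -- column sums over the sub-instance
      intro j hj
      rw [show Finset.Icc 1 H = Finset.Ioc 0 H from Finset.Icc_add_one_left_eq_Ioc 0 H] at hj ⊢
      have hjn : j ∈ Finset.Icc 1 n := by
        rw [hIcc, Finset.mem_Ioc]; rw [Finset.mem_Ioc] at hj; exact ⟨hj.1, by omega⟩
      have hfull := hcol j hjn; rw [hIcc] at hfull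
      have hz : ∑ i ∈ Finset.Ioc H n, m i j = 0 :=
        Finset.sum_eq_zero (fun i hi => m2zero j hj i hi)
      have := hsplit (fun i => m i j)
      omega
    · -- capacity constraints over the sub-instance
      intro j hj
      rw [show Finset.Icc 1 H = Finset.Ioc 0 H from Finset.Icc_add_one_left_eq_Ioc 0 H] at hj ⊢
      have hjn : j ∈ Finset.Icc 1 n := by
        rw [hIcc, Finset.mem_Ioc]; rw [Finset.mem_Ioc] at hj; exact ⟨hj.1, by omega⟩
      have hfull := hcap j hjn; rw [hIcc] at hfull
      have hz : ∑ i ∈ Finset.Ioc H n, m i j * w i = 0 :=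
        Finset.sum_eq_zero (fun i hi => by rw [m2zero j hj i hi, Nat.zero_mul])
      have heq : ∑ i ∈ Finset.Ioc 0 H, m i j * w i = ∑ i ∈ Finset.Ioc 0 n, m i j * w i := by
        have := hsplit (fun i => m i j * w i)
        omega
      rw [heq]
      exact hfull
  · -- base case : k = 1
    have hk1 : k = 1 := by omega
    subst hk1
    have hHhk : h 1 = H := rfl
    have hw1 : w 1 = a 0 + a 1 := by
      rw [wtop 1 le_rfl hhk]
      simp [Finset.sum_range_succ]
    -- bins 1..H : X j ≤ d - 1
    have Xlt : ∀ j, j ∈ Finset.Ioc 0 H → X j < d := by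
      intro j hj
      rw [Finset.mem_Ioc] at hj
      have hjn : j ∈ Finset.Ioc 0 n := Finset.mem_Ioc.2 ⟨hj.1, by omega⟩
      have hcapj := hcap j (by rwa [hIcc]); rw [hIcc] at hcapj
      have hCj := hC1 j hj.1 hj.2
      rw [hw1] at hCj
      rw [hCj] at hcapj
      have hlow := Slow j hjn
      have hlow' : ((a 0 * d + a 1 * X j : ℕ) : ℤ) ≤ (d : ℤ) * ((a 0 : ℕ) + (a 1 : ℕ) : ℕ) - 1 :=
        le_trans (by exact_mod_cast hlow) hcapj
      push_cast at hlow'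
      refine nat_lt_of_int_mul _ _ ha1 ?_
      push_cast
      nlinarith
    -- bin H+1 : X (H+1) < H
    have XH1 : X (H + 1) < H := by
      have hjn : H + 1 ∈ Finset.Ioc 0 n := Finset.mem_Ioc.2 ⟨by omega, by omega⟩
      have hcapj := hcap (H + 1) (by rwa [hIcc]); rw [hIcc] at hcapj
      have hCj := hC2
      rw [hw1, hwmid0 (h 1 + 1) (by omega) (by omega)] at hCj
      rw [hHhk] at hCj
      rw [hCj] at hcapj
      have hlow := Slow (H + 1) hjn
      have hlow' := le_trans (show ((a 0 * d + a 1 * X (H+1) : ℕ) : ℤ) ≤ _ by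
        exact_mod_cast hlow) hcapj
      push_cast at hlow'
      refine nat_lt_of_int_mul _ _ ha1 ?_
      push_cast
      nlinarith
    -- bins beyond H+1 : X j = 0
    have Xzero : ∀ j, j ∈ Finset.Ioc (H + 1) n → X j = 0 := by
      intro j hj
      rw [Finset.mem_Ioc] at hj
      have hjn : j ∈ Finset.Ioc 0 n := Finset.mem_Ioc.2 ⟨by omega, hj.2⟩
      have hcapj := hcap j (by rwa [hIcc]); rw [hIcc] at hcapj
      have hCj := hC3 j (by rw [hHhk]; omega) (by rw [show (1:ℕ) - 1 = 0 from rfl, hh0]; exact hj.2)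
      rw [hwmid0 j (by omega) hj.2] at hCj
      rw [hCj] at hcapj
      have hlow := Slow j hjn
      have hlow' := le_trans (show ((a 0 * d + a 1 * X j : ℕ) : ℤ) ≤ _ by
        exact_mod_cast hlow) hcapj
      push_cast at hlow'
      have : X j < 1 := by
        refine nat_lt_of_int_mul _ _ ha1 ?_
        push_cast
        linarith
      omega
    -- the counting contradiction
    have hs1 : ∑ j ∈ Finset.Ioc 0 H, X j + ∑ j ∈ Finset.Ioc H n, X j = H * d := by
      rw [hsplit X]; exact hsumX
    have hs2 : ∑ j ∈ Finset.Ioc H (H+1), X j + ∑ j ∈ Finset.Ioc (H+1) n, X j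
        = ∑ j ∈ Finset.Ioc H n, X j :=
      Finset.sum_Ioc_consecutive X (by omega) (by omega)
    have hsingle : Finset.Ioc H (H+1) = {H+1} := by
      ext x; simp only [Finset.mem_Ioc, Finset.mem_singleton]; omega
    have hz : ∑ j ∈ Finset.Ioc (H+1) n, X j = 0 :=
      Finset.sum_eq_zero (fun j hj => Xzero j hj)
    have hb : ∑ j ∈ Finset.Ioc 0 H, X j + H ≤ H * d := by
      have : ∀ j ∈ Finset.Ioc 0 H, X j + 1 ≤ d := fun j hj => Xlt j hj
      calc ∑ j ∈ Finset.Ioc 0 H, X j + H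
          = ∑ j ∈ Finset.Ioc 0 H, (X j + 1) := by
            rw [Finset.sum_add_distrib, Finset.sum_const, Nat.card_Ioc, Nat.sub_zero,
              smul_eq_mul, Nat.mul_one]
        _ ≤ ∑ _j ∈ Finset.Ioc 0 H, d := Finset.sum_le_sum this
        _ = H * d := by
            rw [Finset.sum_const, Nat.card_Ioc, Nat.sub_zero, smul_eq_mul]
    rw [hsingle, Finset.sum_singleton] at hs2
    omega


/-- Theorem 1.9, infeasibility part: for weights with at least two
distinct parts and `d ≥ n`, the problem `BP(d, C°; w)` is not feasible. -/
theorem cCirc_not_feasible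
    (n d k : ℕ) (hn : 1 ≤ n) (hk : 1 ≤ k) (hd : n ≤ d)
    (w : ℕ → ℕ) (h a : ℕ → ℕ) (C : ℕ → ℤ)
    (hw : ∀ i, 1 ≤ i → i < n → w (i + 1) ≤ w i)
    (hconj : ConjDecomp w n k h a)
    (hC : IsCCirc w n k d h a C) :
    ¬ ∃ m : ℕ → ℕ → ℕ,
      (∀ i ∈ Finset.Icc 1 n, ∑ j ∈ Finset.Icc 1 n, m i j = d) ∧
      (∀ j ∈ Finset.Icc 1 n, ∑ i ∈ Finset.Icc 1 n, m i j = d) ∧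
      (∀ j ∈ Finset.Icc 1 n,
        ((∑ i ∈ Finset.Icc 1 n, m i j * w i : ℕ) : ℤ) ≤ C j) :=
  cCirc_aux k hk n d hd w h a C hconj hC
end
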